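/- Let $K = \mathbb{F}_q$ be a finite field, let $X$ be a finite subset of $\mathbb{A}^s = K^s$, let $I = I(X)$ be its vanishing ideal, and let $\prec$ be a graded monomial order on $S$. Then for the Reed–Muller-type code $C_X(d)$ of degree $d$ and every integer $1 \le r \le H_I^a(d)$ one has $\delta_r(C_X(d)) = \deg(S/I) - \max\{\deg(S/(I,F)) \mid F \in \mathcal{F}_{\prec,d,r}\}$. -/

import Mathlib

open MvPolynomial
open scoped MonomialOrder

variable {K : Type*} [Field K] {s : ℕ}

/-- The exponent of the initial (leading) monomial of `f` with respect to the
monomial order `m` (it is `0` for `f = 0`). -/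
noncomputable def leadExp (m : MonomialOrder (Fin s)) (f : MvPolynomial (Fin s) K) :
    Fin s →₀ ℕ :=
  m.toSyn.symm (f.support.sup fun a => m.toSyn a)

/-- The coefficient of the initial monomial of `f`; `f` is monic when this is `1`. -/
noncomputable def leadCoeff (m : MonomialOrder (Fin s)) (f : MvPolynomial (Fin s) K) : K :=
  f.coeff (leadExp m f)

/-- The initial monomial `in_≺(f)` of `f`, as a (monic) monomial of the polynomial ring. -/
noncomputable def leadMon (m : MonomialOrder (Fin s)) (f : MvPolynomial (Fin s) K) :
    MvPolynomial (Fin s) K :=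
  monomial (leadExp m f) (1 : K)

/-- The initial ideal `in_≺(I)` of an ideal `I`: the ideal generated by the initial
monomials of the nonzero elements of `I`. -/
noncomputable def initialIdeal (m : MonomialOrder (Fin s)) (I : Ideal (MvPolynomial (Fin s) K)) :
    Ideal (MvPolynomial (Fin s) K) :=
  Ideal.span { g | ∃ f ∈ I, f ≠ 0 ∧ g = leadMon m f }

/-- The footprint `Δ_≺(I)` of `S/I`: the set of standard monomials, i.e. the (monic)
monomials that do not belong to the initial ideal of `I`. -/
noncomputable def stdMonomials (m : MonomialOrder (Fin s)) (I : Ideal (MvPolynomial (Fin s) K)) :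
    Set (MvPolynomial (Fin s) K) :=
  { g | (∃ a : Fin s →₀ ℕ, g = monomial a (1 : K)) ∧ g ∉ initialIdeal m I }

/-- `KΔ_≺(I)`, the `K`-linear span of the standard monomials of `S/I`. -/
noncomputable def stdSpan (m : MonomialOrder (Fin s)) (I : Ideal (MvPolynomial (Fin s) K)) :
    Submodule K (MvPolynomial (Fin s) K) :=
  Submodule.span K (stdMonomials m I)

/-- A monomial order is graded if monomials are first compared by their total degrees. -/
def IsGradedOrder (m : MonomialOrder (Fin s)) : Prop :=
  ∀ a b : Fin s →₀ ℕ, a.degree < b.degree → a ≺[m] b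

/-- The vanishing ideal `I(X)` of a set of points `X ⊆ 𝔸^s = K^s`. -/
def affVanishingIdeal (X : Set (Fin s → K)) : Ideal (MvPolynomial (Fin s) K) where
  carrier := { f | ∀ x ∈ X, eval x f = 0 }
  add_mem' := by
    intro a b ha hb x hx
    simp [ha x hx, hb x hx]
  zero_mem' := by intro x hx; simp
  smul_mem' := by
    intro c f hf x hx
    simp [smul_eq_mul, hf x hx]

/-- The evaluation map `S → K^X`, `f ↦ (f(P₁),…,f(P_m))`, at the points of a finite
set `X` of points of `𝔸^s`. -/
noncomputable def evalMap (X : Finset (Fin s → K)) :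
    MvPolynomial (Fin s) K →ₗ[K] (X → K) where
  toFun f := fun x => eval (x : Fin s → K) f
  map_add' f g := by funext x; simp
  map_smul' c f := by funext x; simp [Algebra.smul_def]

/-- The degree `deg(S/I)`.  For the ideals considered in this paper `S/I` is a
zero-dimensional ring, and its degree (the normalized leading coefficient of the
affine Hilbert polynomial) equals `dim_K (S/I)` (and is `0` when `I = S`). -/
noncomputable def adeg (I : Ideal (MvPolynomial (Fin s) K)) : ℕ :=
  Module.finrank K (MvPolynomial (Fin s) K ⧸ I)

/-- The affine Hilbert function `H_I^a(d) = dim_K (S_{≤d}/I_{≤d})`, computed as the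
dimension of the image of `S_{≤d}` in `S/I`. -/
noncomputable def affineHilbert (I : Ideal (MvPolynomial (Fin s) K)) (d : ℕ) : ℕ :=
  Module.finrank K
    ((restrictTotalDegree (Fin s) K d).map (Submodule.restrictScalars K I).mkQ)

/-- The support `χ(D)` of a subcode `D ⊆ K^ι`. -/
def codeSupport {ι : Type*} (D : Submodule K (ι → K)) : Set ι :=
  { i | ∃ v ∈ D, v i ≠ 0 }

/-- The `r`-th generalized Hamming weight of a linear code `C ⊆ K^ι`: the minimum
size of the support of an `r`-dimensional subcode. -/
noncomputable def ghw {ι : Type*} (C : Submodule K (ι → K)) (r : ℕ) : ℕ :=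
  sInf { n | ∃ D : Submodule K (ι → K),
    D ≤ C ∧ Module.finrank K (↥D) = r ∧ (codeSupport D).ncard = n }

/-- The minimum distance of a linear code: the least Hamming weight of a nonzero
codeword. -/
noncomputable def minDist {ι : Type*} (C : Submodule K (ι → K)) : ℕ :=
  sInf { n | ∃ v ∈ C, v ≠ 0 ∧ ({ i : ι | v i ≠ 0 }).ncard = n }

/-- The affine torus `T = (K^*)^s`. -/
noncomputable def torus (K : Type*) [Field K] [Fintype K] (s : ℕ) : Finset (Fin s → K) :=
  letI := Classical.decEq K
  Finset.univ.filter fun x => ∀ i, x i ≠ 0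

/-- `V_d`: the set of squarefree (monic) monomials of degree `d`. -/
def sqfreeMonomials (K : Type*) [Field K] (s d : ℕ) : Set (MvPolynomial (Fin s) K) :=
  { g | ∃ a : Fin s →₀ ℕ, (∀ i, a i ≤ 1) ∧ a.degree = d ∧ g = monomial a (1 : K) }

/-- `V_{≤d}`: the set of squarefree (monic) monomials of degree at most `d`. -/
def sqfreeMonomialsLe (K : Type*) [Field K] (s d : ℕ) : Set (MvPolynomial (Fin s) K) :=
  { g | ∃ a : Fin s →₀ ℕ, (∀ i, a i ≤ 1) ∧ a.degree ≤ d ∧ g = monomial a (1 : K) }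

/-- `𝓕_{≺,d,r}`: the family of `r`-element sets of monic standard polynomials of `S/I`
of degree at most `d` with pairwise distinct initial monomials. -/
def FprecSet (m : MonomialOrder (Fin s)) (I : Ideal (MvPolynomial (Fin s) K)) (d r : ℕ) :
    Set (Finset (MvPolynomial (Fin s) K)) :=
  { F | F.card = r ∧
        (∀ f ∈ F, f ∈ stdSpan m I ∧ f ≠ 0 ∧ leadCoeff m f = 1 ∧ f.totalDegree ≤ d) ∧
        ∀ f ∈ F, ∀ g ∈ F, leadExp m f = leadExp m g → f = g }

/-!
Over a finite field evaluation identifies `S/I(X)` with `K^X`, so `deg(S/I) = |X|`. Moreover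
`I(X) + (F)` is the vanishing ideal of the common zeros of `F` in `X`, hence
`deg(S/(I,F)) = |X| - |χ(D)|` where `D` is the span of the evaluations of `F`.
Standard polynomials with distinct initial monomials are linearly independent and meet `I` only
in `0`, so `F ↦ D` sends `𝓕_{≺,d,r}` to `r`-dimensional subcodes of `C_X(d)`. Conversely, since
`≺` is graded, normal forms modulo `I` do not raise the degree, so an `r`-dimensional subcode
lifts isomorphically to a space of standard polynomials of degree `≤ d`, and any such space has a
basis of monic polynomials with distinct initial monomials. Minimizing `|χ(D)|` is thus the same
as maximizing `deg(S/(I,F))`.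
-/

theorem sInf_eq_sub_sSup_of_forall_add_eq {A B : Set ℕ} {N : ℕ} (hA : A.Nonempty)
    (hAB : ∀ a ∈ A, ∃ b ∈ B, a + b = N) (hBA : ∀ b ∈ B, ∃ a ∈ A, a + b = N) :
    sInf A = N - sSup B := by
  have hB : BddAbove B := ⟨N, fun b hb => by obtain ⟨a, -, h⟩ := hBA b hb; omega⟩
  obtain ⟨b₀, hb₀, hsum₀⟩ := hAB _ (Nat.sInf_mem hA)
  obtain ⟨a₁, ha₁, hsum₁⟩ := hBA _ (Nat.sSup_mem ⟨b₀, hb₀⟩ hB)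
  have := le_csSup hB hb₀
  have := Nat.sInf_le ha₁
  omega

theorem codeSupport_span {ι : Type*} (V : Set (ι → K)) :
    codeSupport (Submodule.span K V) = {i | ∃ v ∈ V, v i ≠ 0} := by
  ext i
  rw [← not_iff_not]
  simpa [codeSupport, Set.subset_def, SetLike.le_def] using
    Submodule.span_le (s := V) (p := LinearMap.ker (LinearMap.proj i))

theorem Submodule.exists_le_finrank_eq {M : Type*} [AddCommGroup M] [Module K M]
    (C : Submodule K M) {r : ℕ} (hr : r ≤ Module.finrank K C) :
    ∃ D ≤ C, Module.finrank K D = r := by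
  obtain ⟨v, hv⟩ := exists_linearIndependent_of_le_finrank hr
  refine ⟨(Submodule.span K (Set.range v)).map C.subtype, Submodule.map_subtype_le _ _, ?_⟩
  rw [Submodule.finrank_map_subtype_eq, finrank_span_eq_card hv, Fintype.card_fin]

theorem Submodule.finrank_map_of_disjoint_ker {M N : Type*} [AddCommGroup M] [Module K M]
    [AddCommGroup N] [Module K N] {p : Submodule K M} {f : M →ₗ[K] N}
    (h : Disjoint p (LinearMap.ker f)) : Module.finrank K (p.map f) = Module.finrank K p := by
  rw [← LinearMap.range_domRestrict]
  exact LinearMap.finrank_range_of_inj (LinearMap.injective_domRestrict_iff.mpr h)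

namespace IsGradedOrder

variable {m : MonomialOrder (Fin s)}

theorem degree_le_degree (hm : IsGradedOrder m) {a b : Fin s →₀ ℕ} (h : a ≼[m] b) :
    a.degree ≤ b.degree :=
  not_lt.mp fun hlt => not_lt.mpr h (hm b a hlt)

theorem degree_degree (hm : IsGradedOrder m) (f : MvPolynomial (Fin s) K) :
    (m.degree f).degree = f.totalDegree := by
  by_cases hf : f = 0
  · simp [hf]
  refine le_antisymm (le_totalDegree (m.degree_mem_support hf)) (Finset.sup_le fun b hb => ?_)
  exact hm.degree_le_degree (m.le_degree hb)

theorem totalDegree_le_of_degree_le (hm : IsGradedOrder m) {f g : MvPolynomial (Fin s) K}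
    (h : m.degree f ≼[m] m.degree g) : f.totalDegree ≤ g.totalDegree := by
  rw [← hm.degree_degree, ← hm.degree_degree]
  exact hm.degree_le_degree h

end IsGradedOrder

namespace MonomialOrder

variable {σ : Type*} (m : MonomialOrder σ)

theorem linearIndependent_of_injective_degree {R ι : Type*} [CommRing R] [NoZeroDivisors R]
    {v : ι → MvPolynomial σ R} (hv : ∀ i, v i ≠ 0) (hdeg : Function.Injective (m.degree ∘ v)) :
    LinearIndependent R v := by
  classical
  rw [linearIndependent_iff']
  intro t g hsum i hi
  by_contra hgi
  obtain ⟨j, hj, hjmax⟩ := (t.filter (g · ≠ 0)).exists_max_image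
    (fun k => m.toSyn (m.degree (v k))) ⟨i, Finset.mem_filter.mpr ⟨hi, hgi⟩⟩
  rw [Finset.mem_filter] at hj
  -- only the term of maximal degree contributes to the coefficient of `m.degree (v j)`
  have hcoeff : (∑ k ∈ t, g k • v k).coeff (m.degree (v j)) = g j * m.leadingCoeff (v j) := by
    rw [coeff_sum, Finset.sum_eq_single j]
    · rw [coeff_smul, smul_eq_mul, leadingCoeff]
    · intro k hk hkj
      by_cases hgk : g k = 0
      · rw [hgk, zero_smul, coeff_zero]
      have hlt : m.degree (v k) ≺[m] m.degree (v j) :=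
        lt_of_le_of_ne (hjmax k (Finset.mem_filter.mpr ⟨hk, hgk⟩))
          fun h => hkj (hdeg (m.toSyn.injective h))
      rw [coeff_smul, m.coeff_eq_zero_of_lt hlt, smul_zero]
    · exact fun hj' => absurd hj.1 hj'
  rw [hsum, coeff_zero] at hcoeff
  exact mul_ne_zero hj.2 (m.leadingCoeff_ne_zero_iff.mpr (hv j)) hcoeff.symm

theorem degree_inv_leadingCoeff_smul {f : MvPolynomial σ K} (hf : f ≠ 0) :
    m.degree ((m.leadingCoeff f)⁻¹ • f) = m.degree f :=
  m.degree_smul_of_isRegular (inv_ne_zero (m.leadingCoeff_ne_zero_iff.mpr hf)).isUnit.isRegular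

theorem monic_inv_leadingCoeff_smul {f : MvPolynomial σ K} (hf : f ≠ 0) :
    m.Monic ((m.leadingCoeff f)⁻¹ • f) := by
  rw [Monic, leadingCoeff, m.degree_inv_leadingCoeff_smul hf, coeff_smul, smul_eq_mul,
    ← leadingCoeff, inv_mul_cancel₀ (m.leadingCoeff_ne_zero_iff.mpr hf)]

theorem finrank_span_eq_card_of_injOn_degree {F : Finset (MvPolynomial σ K)}
    (h0 : ∀ f ∈ F, f ≠ 0) (hdeg : Set.InjOn m.degree (F : Set (MvPolynomial σ K))) :
    Module.finrank K (Submodule.span K (F : Set (MvPolynomial σ K))) = F.card :=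
  finrank_span_finset_eq_card (m.linearIndependent_of_injective_degree (fun f => h0 f f.2)
    fun f g h => Subtype.ext (hdeg f.2 g.2 h))

theorem exists_finset_monic_injOn_degree (V : Submodule K (MvPolynomial σ K))
    [FiniteDimensional K V] :
    ∃ F : Finset (MvPolynomial σ K), (F : Set (MvPolynomial σ K)) ⊆ V ∧
      F.card = Module.finrank K V ∧ (∀ f ∈ F, m.Monic f) ∧
      Set.InjOn m.degree (F : Set (MvPolynomial σ K)) := by
  classical
  -- take one monic element of `V` for each leading exponent `e ∈ E` occurring in `V`
  set E : Set (σ →₀ ℕ) := m.degree '' {f | f ∈ V ∧ f ≠ 0}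
  have hE : ∀ e : E, ∃ f ∈ V, m.Monic f ∧ m.degree f = e := by
    rintro ⟨_, f, ⟨hfV, hf0⟩, rfl⟩
    exact ⟨_, V.smul_mem _ hfV, m.monic_inv_leadingCoeff_smul hf0,
      m.degree_inv_leadingCoeff_smul hf0⟩
  choose g hgV hgmonic hgdeg using hE
  have hdeg : Function.Injective (m.degree ∘ g) := fun e e' h =>
    Subtype.ext (by simpa only [Function.comp_apply, hgdeg] using h)
  have hli : LinearIndependent K fun e => (⟨g e, hgV e⟩ : V) :=
    .of_comp V.subtype (m.linearIndependent_of_injective_degree (fun e => (hgmonic e).ne_zero) hdeg)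
  have := hli.finite
  have := Fintype.ofFinite E
  -- an element of `V` is determined by its coefficients at the exponents in `E`
  have hcoeff : Function.Injective (LinearMap.pi fun e : E => (lcoeff K e.1).comp V.subtype) := by
    refine (injective_iff_map_eq_zero _).mpr fun f hf => ?_
    by_contra hf0
    have hf0' : (f : MvPolynomial σ K) ≠ 0 := by simpa using hf0
    have := congr_fun hf ⟨_, f, ⟨f.2, hf0'⟩, rfl⟩
    exact m.coeff_degree_ne_zero_iff.mpr hf0' this
  have hcard : Fintype.card E = Module.finrank K V := le_antisymm hli.fintype_card_le_finrank
    (by simpa using LinearMap.finrank_le_finrank_of_injective hcoeff)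
  refine ⟨Finset.univ.image g, ?_, ?_, ?_, ?_⟩
  · rw [Finset.coe_image, Finset.coe_univ, Set.image_univ]
    exact Set.range_subset_iff.mpr hgV
  · rw [Finset.card_image_of_injective _ hdeg.of_comp, Finset.card_univ, hcard]
  · simpa only [Finset.mem_image, Finset.mem_univ, true_and, forall_exists_index,
      forall_apply_eq_imp_iff] using hgmonic
  · rw [Finset.coe_image, Finset.coe_univ, Set.image_univ]
    rintro _ ⟨e, rfl⟩ _ ⟨e', rfl⟩ h
    exact congrArg g (hdeg h)

end MonomialOrder

section Standard

variable (m : MonomialOrder (Fin s)) (I : Ideal (MvPolynomial (Fin s) K))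

theorem stdSpan_eq_restrictSupport :
    stdSpan m I = restrictSupport K {a | monomial a (1 : K) ∉ initialIdeal m I} := by
  rw [restrictSupport_eq_span, stdSpan]
  congr 1
  ext g
  simp only [stdMonomials, Set.mem_ofPred_eq, Set.mem_image]
  constructor
  · rintro ⟨⟨a, rfl⟩, ha⟩
    exact ⟨a, ha, rfl⟩
  · rintro ⟨a, ha, rfl⟩
    exact ⟨⟨a, rfl⟩, ha⟩

theorem mem_stdSpan_iff {f : MvPolynomial (Fin s) K} :
    f ∈ stdSpan m I ↔ ∀ a ∈ f.support, monomial a (1 : K) ∉ initialIdeal m I := by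
  rw [stdSpan_eq_restrictSupport, mem_restrictSupport_iff]
  rfl

theorem disjoint_stdSpan_restrictScalars : Disjoint (stdSpan m I) (I.restrictScalars K) := by
  refine Submodule.disjoint_def.mpr fun f hstd hI => ?_
  by_contra hf0
  exact (mem_stdSpan_iff m I).mp hstd _ (m.degree_mem_support hf0)
    (Ideal.subset_span ⟨f, hI, hf0, rfl⟩)

theorem exists_degree_le_of_monomial_mem_initialIdeal {a : Fin s →₀ ℕ}
    (h : monomial a (1 : K) ∈ initialIdeal m I) : ∃ g ∈ I, g ≠ 0 ∧ m.degree g ≤ a := by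
  have hgen : {g | ∃ f ∈ I, f ≠ 0 ∧ g = leadMon m f} =
      (monomial · (1 : K)) '' (m.degree '' {f | f ∈ I ∧ f ≠ 0}) := by
    ext g
    simp only [Set.mem_ofPred_eq, Set.mem_image]
    constructor
    · rintro ⟨f, hf, hf0, rfl⟩
      exact ⟨_, ⟨f, ⟨hf, hf0⟩, rfl⟩, rfl⟩
    · rintro ⟨_, ⟨f, ⟨hf, hf0⟩, rfl⟩, rfl⟩
      exact ⟨f, hf, hf0, rfl⟩
  rw [initialIdeal, hgen, mem_ideal_span_monomial_image] at h
  obtain ⟨_, ⟨g, ⟨hg, hg0⟩, rfl⟩, hle⟩ := h a (by simp)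
  exact ⟨g, hg, hg0, hle⟩

theorem exists_mem_stdSpan_sub_mem (f : MvPolynomial (Fin s) K) :
    ∃ g ∈ stdSpan m I, f - g ∈ I ∧ m.degree g ≼[m] m.degree f := by
  -- `g` is the remainder of the division of `f` by the nonzero elements of `I`
  set B : Set (MvPolynomial (Fin s) K) := {b | b ∈ I ∧ b ≠ 0}
  obtain ⟨q, g, hfg, hq, hg⟩ :=
    m.div_set (B := B) (fun b hb => (m.leadingCoeff_ne_zero_iff.mpr hb.2).isUnit) f
  set c := Finsupp.linearCombination _ (fun b : B => (b : MvPolynomial (Fin s) K)) q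
  have hc : f - g = c := by rw [hfg, add_sub_cancel_right]
  have hcI : c ∈ I :=
    Ideal.sum_mem _ fun b _ => Ideal.mul_mem_left _ _ b.2.1
  have hcdeg : m.degree c ≼[m] m.degree f :=
    m.degree_sum_le.trans (Finset.sup_le fun b _ => by
      simpa [mul_comm] using hq b)
  refine ⟨g, (mem_stdSpan_iff m I).mpr fun a ha hmem => ?_, hc ▸ hcI, ?_⟩
  · obtain ⟨b, hbI, hb0, hle⟩ := exists_degree_le_of_monomial_mem_initialIdeal m I hmem
    exact hg a ha b ⟨hbI, hb0⟩ hle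
  · have : g = f - c := by rw [← hc, sub_sub_cancel]
    rw [this]
    exact m.degree_sub_le.trans (sup_le le_rfl hcdeg)

end Standard

theorem mem_affVanishingIdeal {X : Set (Fin s → K)} {f : MvPolynomial (Fin s) K} :
    f ∈ affVanishingIdeal X ↔ ∀ x ∈ X, eval x f = 0 := Iff.rfl

theorem affVanishingIdeal_anti {X Y : Set (Fin s → K)} (h : X ⊆ Y) :
    affVanishingIdeal Y ≤ affVanishingIdeal X :=
  fun _ hf x hx => hf x (h hx)

theorem evalMap_apply (X : Finset (Fin s → K)) (f : MvPolynomial (Fin s) K) (x : X) :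
    evalMap X f x = eval (x : Fin s → K) f := rfl

theorem ker_evalMap (X : Finset (Fin s → K)) :
    LinearMap.ker (evalMap X) = (affVanishingIdeal (X : Set (Fin s → K))).restrictScalars K := by
  ext f
  simp only [LinearMap.mem_ker, Submodule.restrictScalars_mem, mem_affVanishingIdeal, funext_iff]
  exact ⟨fun h x hx => h ⟨x, hx⟩, fun h x => h x x.2⟩

theorem disjoint_ker_evalMap_of_le_stdSpan {m : MonomialOrder (Fin s)} {X : Finset (Fin s → K)}
    {P : Submodule K (MvPolynomial (Fin s) K)}
    (hP : P ≤ stdSpan m (affVanishingIdeal (X : Set (Fin s → K)))) :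
    Disjoint P (LinearMap.ker (evalMap X)) := by
  rw [ker_evalMap]
  exact (disjoint_stdSpan_restrictScalars m _).mono_left hP

theorem finrank_map_evalMap (X : Finset (Fin s → K)) (d : ℕ) :
    Module.finrank K ((restrictTotalDegree (Fin s) K d).map (evalMap X)) =
      affineHilbert (affVanishingIdeal (X : Set (Fin s → K))) d := by
  set J := (affVanishingIdeal (X : Set (Fin s → K))).restrictScalars K
  have hJ : J = LinearMap.ker (evalMap X) := (ker_evalMap X).symm
  rw [affineHilbert, ← J.liftQ_mkQ (evalMap X) hJ.le, Submodule.map_comp]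
  exact Submodule.finrank_map_of_disjoint_ker
    (by rw [J.ker_liftQ_eq_bot' _ hJ]; exact disjoint_bot_right)

theorem map_evalMap_stdSpan_inf {m : MonomialOrder (Fin s)} (hm : IsGradedOrder m)
    (X : Finset (Fin s → K)) (d : ℕ) :
    (stdSpan m (affVanishingIdeal (X : Set (Fin s → K))) ⊓ restrictTotalDegree (Fin s) K d).map
      (evalMap X) = (restrictTotalDegree (Fin s) K d).map (evalMap X) := by
  refine le_antisymm (Submodule.map_mono inf_le_right) ?_
  rintro _ ⟨f, hf, rfl⟩
  obtain ⟨g, hg, hfg, hdeg⟩ := exists_mem_stdSpan_sub_mem m _ f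
  refine ⟨g, ⟨hg, ?_⟩, ?_⟩
  · rw [SetLike.mem_coe, mem_restrictTotalDegree] at hf ⊢
    exact (hm.totalDegree_le_of_degree_le hdeg).trans hf
  · rw [← sub_eq_zero, ← map_sub, ← LinearMap.mem_ker, ker_evalMap]
    exact (affVanishingIdeal _).neg_mem_iff.mp (by rwa [neg_sub])

section FiniteField

variable [Fintype K]

theorem evalMap_surjective (X : Finset (Fin s → K)) : Function.Surjective (evalMap X) := by
  classical
  intro w
  -- over a finite field every function `K^s → K` is a polynomial function
  obtain ⟨f, -, hf⟩ : (fun y => if h : y ∈ X then w ⟨y, h⟩ else 0) ∈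
      (restrictDegree (Fin s) K (Fintype.card K - 1)).map (evalₗ K (Fin s)) := by
    rw [map_restrict_dom_evalₗ]
    trivial
  refine ⟨f, funext fun x => ?_⟩
  simpa [evalMap_apply, x.2] using congr_fun hf x

theorem adeg_affVanishingIdeal (X : Finset (Fin s → K)) :
    adeg (affVanishingIdeal (X : Set (Fin s → K))) = X.card := by
  rw [adeg, ← (Submodule.Quotient.restrictScalarsEquiv K _).finrank_eq, ← ker_evalMap,
    ((evalMap X).quotKerEquivOfSurjective (evalMap_surjective X)).finrank_eq,
    Module.finrank_fintype_fun_eq_card, Fintype.card_coe]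

theorem exists_interpolation {X : Finset (Fin s → K)} {x : Fin s → K} (hx : x ∈ X) :
    ∃ e : MvPolynomial (Fin s) K, eval x e = 1 ∧ ∀ y ∈ X, y ≠ x → eval y e = 0 := by
  classical
  obtain ⟨e, he⟩ := evalMap_surjective X (Pi.single ⟨x, hx⟩ 1)
  refine ⟨e, ?_, fun y hy hyx => ?_⟩
  · simpa [evalMap_apply] using congr_fun he ⟨x, hx⟩
  · simpa [evalMap_apply, hyx] using congr_fun he ⟨y, hy⟩

theorem affVanishingIdeal_sup_span (X : Finset (Fin s → K)) (F : Set (MvPolynomial (Fin s) K)) :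
    affVanishingIdeal (X : Set (Fin s → K)) ⊔ Ideal.span F =
      affVanishingIdeal {x ∈ (X : Set (Fin s → K)) | ∀ f ∈ F, eval x f = 0} := by
  classical
  refine le_antisymm (sup_le (affVanishingIdeal_anti (Set.sep_subset _ _))
    (Ideal.span_le.mpr fun f hf x hx => hx.2 f hf)) fun g hg => ?_
  -- an `f ∈ F` not vanishing at `x`, times an interpolation polynomial of `x`, gives an element
  -- of `(F)` which is `1` at `x` and `0` on the rest of `X`
  have hsep : ∀ x ∈ X, (∃ f ∈ F, eval x f ≠ 0) →
      ∃ p ∈ Ideal.span F, eval x p = 1 ∧ ∀ y ∈ X, y ≠ x → eval y p = 0 := by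
    rintro x hx ⟨f, hfF, hfx⟩
    obtain ⟨e, hex, hey⟩ := exists_interpolation hx
    refine ⟨C (eval x f)⁻¹ * e * f, Ideal.mul_mem_left _ _ (Ideal.subset_span hfF), ?_,
      fun y hy hyx => ?_⟩
    · rw [eval_mul, eval_mul, eval_C, hex, mul_one, inv_mul_cancel₀ hfx]
    · rw [eval_mul, eval_mul, hey y hy hyx, mul_zero, zero_mul]
  choose! p hpF hpx hpy using hsep
  set Y := X.filter fun x => ∃ f ∈ F, eval x f ≠ 0
  have hsum : ∑ x ∈ Y, C (eval x g) * p x ∈ Ideal.span F :=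
    Ideal.sum_mem _ fun x hx => Ideal.mul_mem_left _ _ (hpF x (Finset.mem_filter.mp hx).1
      (Finset.mem_filter.mp hx).2)
  have hdiff : g - ∑ x ∈ Y, C (eval x g) * p x ∈ affVanishingIdeal (X : Set (Fin s → K)) := by
    intro y hy
    have hoff : ∀ x ∈ Y, x ≠ y → eval y (C (eval x g) * p x) = 0 := fun x hx hxy => by
      rw [eval_mul, hpy x (Finset.mem_filter.mp hx).1 (Finset.mem_filter.mp hx).2 y hy
        hxy.symm, mul_zero]
    rw [eval_sub, eval_sum, sub_eq_zero]
    by_cases hyY : y ∈ Y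
    · rw [Finset.sum_eq_single_of_mem y hyY hoff, eval_mul, eval_C,
        hpx y hy (Finset.mem_filter.mp hyY).2, mul_one]
    · have hyZ : ∀ f ∈ F, eval y f = 0 := by
        simp only [Y, Finset.mem_filter, not_and, not_exists, ne_eq, not_not] at hyY
        exact hyY hy
      exact (hg y ⟨hy, hyZ⟩).trans
        (Finset.sum_eq_zero fun x hx => hoff x hx fun h => hyY (h ▸ hx)).symm
  simpa using Submodule.add_mem_sup hdiff hsum

theorem adeg_sup_span_add_ncard_codeSupport (X : Finset (Fin s → K))
    (F : Set (MvPolynomial (Fin s) K)) :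
    adeg (affVanishingIdeal (X : Set (Fin s → K)) ⊔ Ideal.span F) +
      (codeSupport (Submodule.span K (evalMap X '' F))).ncard = X.card := by
  classical
  have hzeros : {x ∈ (X : Set (Fin s → K)) | ∀ f ∈ F, eval x f = 0} =
      ↑(X.filter fun x => ∀ f ∈ F, eval x f = 0) := by
    rw [Finset.coe_filter]
    rfl
  have hsupp : (codeSupport (Submodule.span K (evalMap X '' F))).ncard =
      (X.filter fun x => ¬ ∀ f ∈ F, eval x f = 0).card := by
    rw [codeSupport_span, ← Set.ncard_image_of_injective _ Subtype.val_injective,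
      ← Set.ncard_coe_finset]
    congr 1
    ext x
    simp [evalMap_apply, and_comm]
  rw [affVanishingIdeal_sup_span, hzeros, adeg_affVanishingIdeal, hsupp,
    Finset.card_filter_add_card_filter_not]

variable {m : MonomialOrder (Fin s)} {X : Finset (Fin s → K)} {d r : ℕ}

theorem exists_subcode_of_mem_FprecSet {F : Finset (MvPolynomial (Fin s) K)}
    (hF : F ∈ FprecSet m (affVanishingIdeal (X : Set (Fin s → K))) d r) :
    ∃ D ≤ (restrictTotalDegree (Fin s) K d).map (evalMap X), Module.finrank K D = r ∧
      adeg (affVanishingIdeal (X : Set (Fin s → K)) ⊔ Ideal.span (F : Set (MvPolynomial (Fin s) K)))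
        + (codeSupport D).ncard = X.card := by
  -- `leadExp m` and `leadCoeff m` are definitionally `m.degree` and `m.leadingCoeff`
  obtain ⟨hcard, hF, hdeg⟩ := hF
  refine ⟨Submodule.span K (evalMap X '' F), ?_, ?_, adeg_sup_span_add_ncard_codeSupport X F⟩
  · rw [Submodule.span_le]
    rintro _ ⟨f, hf, rfl⟩
    exact ⟨f, (mem_restrictTotalDegree _ _ _).mpr (hF f hf).2.2.2, rfl⟩
  · have hstd : Submodule.span K (F : Set (MvPolynomial (Fin s) K)) ≤
        stdSpan m (affVanishingIdeal (X : Set (Fin s → K))) :=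
      Submodule.span_le.mpr fun f hf => (hF f hf).1
    rw [← Submodule.map_span,
      Submodule.finrank_map_of_disjoint_ker (disjoint_ker_evalMap_of_le_stdSpan (X := X) hstd),
      m.finrank_span_eq_card_of_injOn_degree (fun f hf => (hF f hf).2.1)
        fun f hf g hg h => hdeg f hf g hg h, hcard]

theorem exists_mem_FprecSet_of_subcode (hm : IsGradedOrder m) {D : Submodule K (X → K)}
    (hDC : D ≤ (restrictTotalDegree (Fin s) K d).map (evalMap X)) (hDr : Module.finrank K D = r) :
    ∃ F ∈ FprecSet m (affVanishingIdeal (X : Set (Fin s → K))) d r,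
      adeg (affVanishingIdeal (X : Set (Fin s → K)) ⊔ Ideal.span (F : Set (MvPolynomial (Fin s) K)))
        + (codeSupport D).ncard = X.card := by
  set P := stdSpan m (affVanishingIdeal (X : Set (Fin s → K))) ⊓ restrictTotalDegree (Fin s) K d
  set Q := P ⊓ D.comap (evalMap X)
  have hQP : Q ≤ P := inf_le_left
  have hQD : Q.map (evalMap X) = D := by
    rw [← Submodule.map_inf_eq_map_inf_comap, map_evalMap_stdSpan_inf hm, inf_eq_right.mpr hDC]
  have hQr : Module.finrank K Q = r := by
    rw [← hDr, ← hQD, Submodule.finrank_map_of_disjoint_ker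
      (disjoint_ker_evalMap_of_le_stdSpan (X := X) (hQP.trans inf_le_left))]
  have : FiniteDimensional K Q := Submodule.finiteDimensional_of_le (hQP.trans inf_le_right)
  obtain ⟨F, hFQ, hFcard, hFmonic, hFdeg⟩ := m.exists_finset_monic_injOn_degree Q
  have hFspan : Submodule.span K (F : Set (MvPolynomial (Fin s) K)) = Q :=
    Submodule.eq_of_le_of_finrank_eq (Submodule.span_le.mpr hFQ) (by
      rw [m.finrank_span_eq_card_of_injOn_degree (fun f hf => (hFmonic f hf).ne_zero) hFdeg,
        hFcard])
  refine ⟨F, ⟨hFcard.trans hQr, fun f hf => ⟨(hQP (hFQ hf)).1, (hFmonic f hf).ne_zero,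
    hFmonic f hf, (mem_restrictTotalDegree _ _ _).mp (hQP (hFQ hf)).2⟩,
    fun f hf g hg h => hFdeg hf hg h⟩, ?_⟩
  rw [← hQD, ← hFspan, Submodule.map_span]
  exact adeg_sup_span_add_ncard_codeSupport X F

end FiniteField

theorem ghw_reed_muller_type_code_general [Fintype K] (X : Finset (Fin s → K))
    (m : MonomialOrder (Fin s)) (hm : IsGradedOrder m) (d r : ℕ)
    (hr2 : r ≤ affineHilbert (affVanishingIdeal (X : Set (Fin s → K))) d) :
    ghw ((restrictTotalDegree (Fin s) K d).map (evalMap X)) r =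
      adeg (affVanishingIdeal (X : Set (Fin s → K))) -
        sSup { n | ∃ F ∈ FprecSet m (affVanishingIdeal (X : Set (Fin s → K))) d r,
          n = adeg (affVanishingIdeal (X : Set (Fin s → K)) ⊔
                Ideal.span (F : Set (MvPolynomial (Fin s) K))) } := by
  rw [adeg_affVanishingIdeal]
  refine sInf_eq_sub_sSup_of_forall_add_eq ?_ ?_ ?_
  · obtain ⟨D, hDC, hDr⟩ :=
      Submodule.exists_le_finrank_eq _ (hr2.trans_eq (finrank_map_evalMap X d).symm)
    exact ⟨_, D, hDC, hDr, rfl⟩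
  · rintro _ ⟨D, hDC, hDr, rfl⟩
    obtain ⟨F, hF, hcount⟩ := exists_mem_FprecSet_of_subcode hm hDC hDr
    exact ⟨_, ⟨F, hF, rfl⟩, by omega⟩
  · rintro _ ⟨F, hF, rfl⟩
    obtain ⟨D, hDC, hDr, hcount⟩ := exists_subcode_of_mem_FprecSet hF
    exact ⟨_, ⟨D, hDC, hDr, rfl⟩, by omega⟩

/-- Corollary (degree formula for the generalized Hamming weights of the
Reed–Muller-type code `C_X(d)`). -/
theorem ghw_reed_muller_type_code [Fintype K] (X : Finset (Fin s → K))
    (m : MonomialOrder (Fin s)) (hm : IsGradedOrder m) (d r : ℕ)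
    (hr1 : 1 ≤ r) (hr2 : r ≤ affineHilbert (affVanishingIdeal (X : Set (Fin s → K))) d) :
    ghw ((restrictTotalDegree (Fin s) K d).map (evalMap X)) r =
      adeg (affVanishingIdeal (X : Set (Fin s → K))) -
        sSup { n | ∃ F ∈ FprecSet m (affVanishingIdeal (X : Set (Fin s → K))) d r,
          n = adeg (affVanishingIdeal (X : Set (Fin s → K)) ⊔
                Ideal.span (F : Set (MvPolynomial (Fin s) K))) } :=
  ghw_reed_muller_type_code_general X m hm d r hr2
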